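/- Let X be a path-connected topological space and let α ∈ π₁(X, x₀) be a central element that lies in the image of ev_* : π₁(G, id) → π₁(X, x₀) for some path-connected group G of homeomorphisms of X (with ev(g) = g·x₀). Then α acts trivially on all homotopy groups πₙ(X, x₀). -/

import Mathlib

open CategoryTheory FundamentalGroupoid unitInterval Topology Topology.Homotopy

universe u v

noncomputable section

attribute [local instance] Path.Homotopic.setoid

/-- The homomorphism on fundamental groups induced by a continuous map. -/
def pi1Map {X Y : Type u} [TopologicalSpace X] [TopologicalSpace Y] (f : C(X, Y)) (x : X) :
    FundamentalGroup X x →* FundamentalGroup Y (f x) :=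
  (πₘ (TopCat.ofHom f)).mapEnd ⟨x⟩

/-- A Serre fibration: the homotopy lifting property with respect to all cubes. -/
def IsSerreFibration {E : Type u} {B : Type v} [TopologicalSpace E] [TopologicalSpace B]
    (p : C(E, B)) : Prop :=
  ∀ n : ℕ, ∀ (H : C((Fin n → I) × I, B)) (h₀ : C(Fin n → I, E)),
    (∀ y, p (h₀ y) = H (y, 0)) →
      ∃ H' : C((Fin n → I) × I, E), p.comp H' = H ∧ ∀ y, H' (y, 0) = h₀ y

/-- A space is aspherical if all of its homotopy groups in degrees `≥ 2` vanish. -/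
def Aspherical (X : Type u) [TopologicalSpace X] : Prop :=
  ∀ n : ℕ, 2 ≤ n → ∀ x : X, Subsingleton (HomotopyGroup.Pi n X x)

/-- A space admits a CW structure if it is homeomorphic to (the realization of)
a CW complex. -/
def HasCWStructure (X : Type u) [TopologicalSpace X] : Prop :=
  ∃ K : TopCat.{u}, Nonempty (TopCat.CWComplex K) ∧ Nonempty (X ≃ₜ K)

/-- The loop `γ` acts trivially on `πₙ(X, x₀)`: for every generalized `n`-loop `f` and
every homotopy `H` of `f` moving the boundary of the cube along `γ`, the end of the
homotopy is homotopic rel boundary to `f`.  (This is the standard action of `π₁` on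
`πₙ` by change of basepoint.) -/
def LoopActsTriviallyOnPi {X : Type u} [TopologicalSpace X] {x₀ : X}
    (γ : Path x₀ x₀) (n : ℕ) : Prop :=
  ∀ (f : GenLoop (Fin n) X x₀) (H : C((Fin n → I) × I, X))
    (_ : ∀ y, H (y, 0) = f.1 y)
    (hbd : ∀ (y : Fin n → I) (t : I), y ∈ Cube.boundary (Fin n) → H (y, t) = γ t),
    GenLoop.Homotopic f
      ⟨H.comp ⟨fun y => (y, (1 : I)), by fun_prop⟩, fun y hy => by
        show H (y, 1) = x₀
        rw [hbd y 1 hy, γ.target]⟩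

/-!
Lift `α` to a loop `β` in `G`; then `γ` is homotopic to the orbit loop `t ↦ β t • x₀`. If `H`
is a homotopy of an `n`-loop whose boundary runs along `γ`, then `(y, t) ↦ (β t)⁻¹ • H (y, t)`
has the same ends and its boundary runs along `t ↦ (β t)⁻¹ • γ t`. Acting pointwise by a loop
of `G` is concatenation with its orbit loop up to homotopy, so this loop is homotopic to
`(β⁻¹ • x₀) · γ ≃ (β⁻¹ • x₀) · (β • x₀) ≃ (β⁻¹ β) • x₀`, which is constant. Finally, a homotopy
whose boundary traces a null-homotopic loop can be traded for one rel boundary: run it on a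
cube of half size and fill the collar with the null-homotopy.
-/

lemma Set.projIcc_zero_one_eq_zero_or_one {a : ℝ} (h : 1 / 2 ≤ |a - 1 / 2|) :
    projIcc (0 : ℝ) 1 zero_le_one a = 0 ∨ projIcc (0 : ℝ) 1 zero_le_one a = 1 := by
  rcases le_abs'.mp h with h | h
  · exact .inl (projIcc_of_le_left _ (by linarith))
  · exact .inr (projIcc_of_right_le _ (by linarith))

namespace Cube

open Set

variable {N : Type*}

def stretch (s : I) (y : I^N) : I^N :=
  fun i => projIcc 0 1 zero_le_one (1 / 2 + (1 + s) * ((y i : ℝ) - 1 / 2))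

@[fun_prop]
lemma continuous_stretch {α : Type*} [TopologicalSpace α] {s : α → I} {y : α → I^N}
    (hs : Continuous s) (hy : Continuous y) : Continuous fun a => stretch (s a) (y a) :=
  continuous_pi fun _ => continuous_projIcc.comp (by fun_prop)

@[simp]
lemma stretch_zero (y : I^N) : stretch 0 y = y := by
  funext i
  simp [stretch]

lemma stretch_apply_eq_zero_or_one {s : I} {y : I^N} {i : N}
    (h : 1 / 2 ≤ (1 + (s : ℝ)) * |(y i : ℝ) - 1 / 2|) :
    stretch s y i = 0 ∨ stretch s y i = 1 := by
  refine projIcc_zero_one_eq_zero_or_one ?_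
  rwa [add_sub_cancel_left, abs_mul, abs_of_pos (by linarith [s.2.1] : (0 : ℝ) < 1 + s)]

lemma stretch_mem_boundary {s : I} {y : I^N} (hy : y ∈ boundary N) : stretch s y ∈ boundary N := by
  obtain ⟨i, hi⟩ := hy
  refine ⟨i, stretch_apply_eq_zero_or_one ?_⟩
  have : |(y i : ℝ) - 1 / 2| = 1 / 2 := by rcases hi with hi | hi <;> norm_num [hi]
  nlinarith [s.2.1]

variable [Fintype N]

def centerDist (y : I^N) : ℝ := ‖fun i => (y i : ℝ) - 1 / 2‖

@[fun_prop]
lemma continuous_centerDist : Continuous (centerDist (N := N)) := by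
  unfold centerDist; fun_prop

lemma stretch_one_mem_boundary {y : I^N} (h : 1 / 4 ≤ centerDist y) :
    stretch 1 y ∈ boundary N := by
  have : ¬ ∀ i, ‖(y i : ℝ) - 1 / 2‖ < 1 / 4 := by
    rw [← pi_norm_lt_iff (by norm_num)]
    exact h.not_gt
  push Not at this
  obtain ⟨i, hi⟩ := this
  refine ⟨i, stretch_apply_eq_zero_or_one ?_⟩
  norm_num at hi ⊢
  linarith

lemma half_le_centerDist {y : I^N} (hy : y ∈ boundary N) : 1 / 2 ≤ centerDist y := by
  obtain ⟨i, hi⟩ := hy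
  refine le_trans ?_ (norm_le_pi_norm (fun i => (y i : ℝ) - 1 / 2) i)
  rcases hi with hi | hi <;> norm_num [hi]

end Cube

namespace GenLoop

open Cube (stretch centerDist stretch_mem_boundary)
open Set

variable {N X : Type*} [TopologicalSpace X] {x : X}

lemma homotopic_of_continuousMap {f g : Ω^ N X x} (K : C(I × (I^N), X))
    (h₀ : ∀ y, K (0, y) = f y) (h₁ : ∀ y, K (1, y) = g y)
    (hK : ∀ t, ∀ y ∈ Cube.boundary N, K (t, y) = x) : Homotopic f g :=
  ⟨⟨⟨K, h₀, h₁⟩, fun t y hy => (hK t y hy).trans (GenLoop.boundary f y hy).symm⟩⟩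

def zoom (f : Ω^ N X x) : Ω^ N X x :=
  ⟨f.1.comp ⟨stretch 1, by fun_prop⟩,
    fun _ hy => GenLoop.boundary f _ (stretch_mem_boundary hy)⟩

lemma homotopic_zoom (f : Ω^ N X x) : Homotopic f (zoom f) :=
  homotopic_of_continuousMap ⟨fun p => f (stretch p.1 p.2), by fun_prop⟩
    (fun y => by simp) (fun _ => rfl) fun _ _ hy => GenLoop.boundary f _ (stretch_mem_boundary hy)

variable [Fintype N]

lemma zoom_homotopic_zoom {f g : Ω^ N X x} {ε : Path x x} (F : ε.Homotopy (Path.refl x))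
    (H : C((I^N) × I, X)) (h₀ : ∀ y, H (y, 0) = f y) (h₁ : ∀ y, H (y, 1) = g y)
    (hH : ∀ y t, y ∈ Cube.boundary N → H (y, t) = ε t) : Homotopic (zoom f) (zoom g) := by
  let collar : (I^N) → I := fun y => projIcc 0 1 zero_le_one (4 * centerDist y - 1)
  -- Run `H` on the cube stretched by 2 inside `centerDist ≤ 1 / 4`, and the null-homotopy `F`
  -- across the collar outside, from `ε` on its inner edge to the constant loop on `∂Iⁿ`.
  let K : I × (I^N) → X := fun p =>
    if centerDist p.2 ≤ 1 / 4 then H (stretch 1 p.2, p.1) else F (collar p.2, p.1)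
  have hK : Continuous K := by
    refine Continuous.if_le (by fun_prop) ?_ (by fun_prop)
      continuous_const fun p hp => ?_
    · exact F.continuous.comp ((continuous_projIcc.comp (by fun_prop)).prodMk continuous_fst)
    · have hc : collar p.2 = 0 := projIcc_of_le_left _ (by linarith)
      simp only [hc, F.apply_zero]
      exact hH _ _ (Cube.stretch_one_mem_boundary hp.ge)
  have hK_end : ∀ (t : I) (k : Ω^ N X x), (∀ y, H (y, t) = k y) → (∀ s, F (s, t) = x) →
      ∀ y, K (t, y) = zoom k y := by
    intro t k hHk hF y
    by_cases h : centerDist y ≤ 1 / 4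
    · simp only [K, if_pos h, hHk]
      rfl
    · simp only [K, if_neg h, hF]
      exact (GenLoop.boundary k _ (Cube.stretch_one_mem_boundary (not_le.mp h).le)).symm
  refine homotopic_of_continuousMap ⟨K, hK⟩ (hK_end 0 f h₀ F.source) (hK_end 1 g h₁ F.target)
    fun t y hy => ?_
  have hr := Cube.half_le_centerDist hy
  have hc : collar y = 1 := projIcc_of_right_le _ (by linarith)
  change K (t, y) = x
  simp only [K, if_neg (by linarith : ¬ centerDist y ≤ 1 / 4), hc, F.apply_one]
  rfl

lemma homotopic_of_boundary_trace_nullhomotopic {f g : Ω^ N X x} {ε : Path x x}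
    (hε : ε.Homotopic (Path.refl x)) (H : C((I^N) × I, X)) (h₀ : ∀ y, H (y, 0) = f y)
    (h₁ : ∀ y, H (y, 1) = g y) (hH : ∀ y t, y ∈ Cube.boundary N → H (y, t) = ε t) :
    Homotopic f g :=
  let ⟨F⟩ := hε
  (homotopic_zoom f).trans ((zoom_homotopic_zoom F H h₀ h₁ hH).trans (homotopic_zoom g).symm)

end GenLoop

lemma Path.prod_homotopic_prod_refl_trans_refl_prod {A B : Type*} [TopologicalSpace A]
    [TopologicalSpace B] {a a' : A} {b b' : B} (p : Path a a') (q : Path b b') :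
    (p.prod q).Homotopic ((p.prod (Path.refl b)).trans ((Path.refl a').prod q)) := by
  rw [Path.trans_prod_eq_prod_trans]
  exact ⟨Path.Homotopic.prodHomotopy (Path.Homotopy.transRefl p).symm
    (Path.Homotopy.reflTrans q).symm⟩

section Action

variable {G : Type*} [TopologicalSpace G]

lemma Path.homotopic_trans_of_forall_eq_smul {X : Type*} [TopologicalSpace X] [Monoid G]
    [MulAction G X] [ContinuousSMul G X] {x : X} {β : Path (1 : G) 1} {τ d e : Path x x}
    (hd : ∀ t, d t = β t • x) (he : ∀ t, e t = β t • τ t) : e.Homotopic (d.trans τ) := by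
  have h := ((β.prod_homotopic_prod_refl_trans_refl_prod τ).map
    ⟨fun p => p.1 • p.2, continuous_smul⟩).pathCast (one_smul G x).symm (one_smul G x).symm
  convert h using 1 <;> ext t
  · simp [he]
  · simp [Path.trans_apply, hd]

variable [Group G] [IsTopologicalGroup G] {X : Type u} [TopologicalSpace X] [MulAction G X]
  [ContinuousSMul G X] {x : X}

lemma Path.inv_smul_homotopic_refl {β : Path (1 : G) 1} {γ δ ε : Path x x}
    (hδ : ∀ t, δ t = β t • x) (hε : ∀ t, ε t = (β t)⁻¹ • γ t) (h : δ.Homotopic γ) :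
    ε.Homotopic (Path.refl x) := by
  let β' : Path (1 : G) 1 := β.inv.cast inv_one.symm inv_one.symm
  let η : Path x x := ⟨⟨fun t => (β t)⁻¹ • x, by fun_prop⟩, by simp, by simp⟩
  have hεγ : ε.Homotopic (η.trans γ) :=
    Path.homotopic_trans_of_forall_eq_smul (β := β') (fun _ => rfl) hε
  have hδ_null : (Path.refl x).Homotopic (η.trans δ) :=
    Path.homotopic_trans_of_forall_eq_smul (β := β') (fun _ => rfl) fun t => by simp [β', hδ]
  exact hεγ.trans ((Path.Homotopic.hcomp (.refl η) h.symm).trans hδ_null.symm)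

lemma loopActsTriviallyOnPi_of_homotopic_orbit {β : Path (1 : G) 1} {γ δ : Path x x}
    (hδ : ∀ t, δ t = β t • x) (h : δ.Homotopic γ) (n : ℕ) : LoopActsTriviallyOnPi γ n := by
  intro f H hH₀ hH
  let ε : Path x x := ⟨⟨fun t => (β t)⁻¹ • γ t, by fun_prop⟩, by simp, by simp⟩
  refine GenLoop.homotopic_of_boundary_trace_nullhomotopic
    (Path.inv_smul_homotopic_refl hδ (ε := ε) (fun _ => rfl) h)
    ⟨fun p => (β p.2)⁻¹ • H p, by fun_prop⟩ (fun y => ?_) (fun y => ?_) fun y t hy => ?_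
  · simp [hH₀]
  · change (β 1)⁻¹ • H (y, 1) = H (y, 1)
    rw [β.target, inv_one, one_smul]
  · simp [hH y t hy, ε]

end Action

theorem central_gottlieb_acts_trivially_general {G X : Type u} [Group G] [TopologicalSpace G]
    [IsTopologicalGroup G] [TopologicalSpace X] [MulAction G X] [ContinuousSMul G X] (x₀ : X)
    (ev : C(G, X)) (hev : ∀ g : G, ev g = g • x₀) (hb : ev 1 = x₀)
    (α : FundamentalGroup X x₀)
    (hGott : ∃ a : FundamentalGroup G 1,
      (hb ▸ pi1Map ev 1 a : FundamentalGroup X x₀) = α) :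
    ∀ (n : ℕ) (γ : Path x₀ x₀),
      FundamentalGroup.fromPath (X := TopCat.of X) ⟦γ⟧ = α →
        LoopActsTriviallyOnPi γ n := by
  subst hb
  intro n γ hγ
  obtain ⟨a, ha⟩ := hGott
  obtain ⟨β, rfl⟩ := Quotient.exists_rep a
  have hβγ : (β.map ev.continuous).Homotopic γ := Quotient.exact (ha.trans hγ.symm)
  exact loopActsTriviallyOnPi_of_homotopic_orbit (fun t => hev (β t)) hβγ n

/-- Let `X` be a path-connected topological space and let
`α ∈ π₁(X, x₀)` be a central element that lies in the image of
`ev⁎ : π₁(G, 1) → π₁(X, x₀)` for some path-connected (topological) group `G` acting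
continuously on `X` (with `ev g = g • x₀`).  Then `α` acts trivially on all homotopy
groups `πₙ(X, x₀)` (via any loop representing it). -/
theorem central_gottlieb_acts_trivially {G X : Type u} [Group G] [TopologicalSpace G]
    [IsTopologicalGroup G] [PathConnectedSpace G] [TopologicalSpace X]
    [PathConnectedSpace X] [MulAction G X] [ContinuousSMul G X] (x₀ : X)
    (ev : C(G, X)) (hev : ∀ g : G, ev g = g • x₀) (hb : ev 1 = x₀)
    (α : FundamentalGroup X x₀)
    (hcent : α ∈ Subgroup.center (FundamentalGroup X x₀))
    (hGott : ∃ a : FundamentalGroup G 1,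
      (hb ▸ pi1Map ev 1 a : FundamentalGroup X x₀) = α) :
    ∀ (n : ℕ) (γ : Path x₀ x₀),
      FundamentalGroup.fromPath (X := TopCat.of X) ⟦γ⟧ = α →
        LoopActsTriviallyOnPi γ n :=
  central_gottlieb_acts_trivially_general x₀ ev hev hb α hGott

end
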